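/- Full Diophantine exclusion estimate: Under the assumptions of the single-resonance estimate, if τ > d, then the set of ξ ∈ Π for which the Diophantine condition |⟨k, ω(ξ)⟩| > γ/|k|^τ fails for some nonzero k ∈ ℤ^d has Lebesgue measure at most C'' · γ, where C'' depends only on C, d, τ, and the diameter of Π. Consequently, for small γ the Diophantine frequencies have nearly full measure in Π. -/

import Mathlib

/-!
The resonant set `{ξ ∈ Pa | |⟨k, ω ξ⟩| ≤ ε}` is mapped by `ω` into a slab of width `2ε / ‖k‖`
inside a ball containing `ω '' Pa`, and `ω⁻¹` is `C`-Lipschitz on `ω '' Pa`, so the resonant set has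
measure `O(ε / ‖k‖)`. Taking `ε = γ ‖k‖ ^ (-τ)` and summing over `k ≠ 0` gives `O(γ)`, because
`∑ ‖k‖ ^ (-(τ + 1))` converges over the lattice `ℤ^d` once `τ + 1 > d`.
-/

open MeasureTheory Metric Set Module
open scoped ENNReal NNReal

theorem Matrix.det_one_updateRow {n R : Type*} [Fintype n] [DecidableEq n] [CommRing R]
    (j : n) (v : n → R) : ((1 : Matrix n n R).updateRow j v).det = v j := by
  have hv : v = ∑ l, v l • (1 : Matrix n n R) l := by
    ext i; simp [Matrix.one_apply]
  conv_lhs => rw [hv]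
  rw [Matrix.det_updateRow_sum]
  simp

theorem Pi.exists_norm_eq_abs_apply {ι : Type*} [Fintype ι] [Nonempty ι] (k : ι → ℝ) :
    ∃ j, ‖k‖ = |k j| := by
  obtain ⟨j, -, hj⟩ := Finset.exists_mem_eq_sup Finset.univ Finset.univ_nonempty (‖k ·‖₊)
  exact ⟨j, by rw [Pi.norm_def, hj, coe_nnnorm, Real.norm_eq_abs]⟩

theorem Pi.norm_intCast {ι : Type*} [Fintype ι] (k : ι → ℤ) :
    ‖(fun i => (k i : ℝ))‖ = ‖k‖ := by
  simp only [Pi.norm_def]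
  congr 2

theorem summable_int_pi_norm_rpow_neg {ι : Type*} [Fintype ι] {s : ℝ}
    (hs : (Fintype.card ι : ℝ) < s) : Summable fun k : ι → ℤ => ‖k‖ ^ (-s) := by
  classical
  let b := Pi.basisFun ℝ ι
  let L := Submodule.span ℤ (Set.range b)
  have hrank : finrank ℤ L = Fintype.card ι := by
    rw [ZLattice.rank ℝ L]
    simp
  have hL := ZLattice.summable_norm_rpow L (-s) (by rw [hrank]; linarith)
  refine ((b.restrictScalars ℤ).equivFun.symm.toEquiv.summable_iff.mpr hL).congr fun k => ?_
  have hk : (((b.restrictScalars ℤ).equivFun.symm k : L) : ι → ℝ) = fun i => (k i : ℝ) := by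
    ext j
    simp [Basis.equivFun_symm_apply, b, Finset.sum_apply, Pi.basisFun_apply, Pi.single_apply]
  simp only [Function.comp_apply, LinearEquiv.coe_toEquiv, Submodule.coe_norm, hk,
    Pi.norm_intCast]

theorem LipschitzOnWith.isBounded_image {α β : Type*} [PseudoMetricSpace α]
    [PseudoMetricSpace β] {K : ℝ≥0} {f : α → β} {s : Set α} (hf : LipschitzOnWith K f s)
    (hs : Bornology.IsBounded s) : Bornology.IsBounded (f '' s) := by
  obtain ⟨D, hD⟩ := isBounded_iff.mp hs
  exact isBounded_image_iff.mpr ⟨K * D, fun x hx y hy =>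
    (hf.dist_le_mul x hx y hy).trans (mul_le_mul_of_nonneg_left (hD hx hy) K.coe_nonneg)⟩

theorem measure_iUnion_le_ofReal_tsum {α ι : Type*} [MeasurableSpace α] [Countable ι]
    {μ : Measure α} {s : ι → Set α} {f : ι → ℝ} (hf : Summable f) (hf0 : ∀ i, 0 ≤ f i)
    (h : ∀ i, μ (s i) ≤ ENNReal.ofReal (f i)) :
    μ (⋃ i, s i) ≤ ENNReal.ofReal (∑' i, f i) :=
  calc μ (⋃ i, s i) ≤ ∑' i, μ (s i) := measure_iUnion_le s
    _ ≤ ∑' i, ENNReal.ofReal (f i) := ENNReal.tsum_le_tsum h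
    _ = ENNReal.ofReal (∑' i, f i) := (ENNReal.ofReal_tsum_of_nonneg hf0 hf).symm

theorem hausdorffMeasure_le_of_dist_le_mul_dist {X Y : Type*} [MetricSpace X] [MetricSpace Y]
    [MeasurableSpace X] [BorelSpace X] [MeasurableSpace Y] [BorelSpace Y]
    {f : X → Y} {s : Set X} {K : ℝ≥0} (hf : ∀ x ∈ s, ∀ y ∈ s, dist x y ≤ K * dist (f x) (f y))
    {d : ℝ} (hd : 0 ≤ d) : μH[d] s ≤ (K : ℝ≥0∞) ^ d * μH[d] (f '' s) := by
  rcases s.eq_empty_or_nonempty with rfl | ⟨x₀, -⟩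
  · simp
  have : Nonempty X := ⟨x₀⟩
  set g := Function.invFunOn f s
  have hgf : ∀ x ∈ s, g (f x) = x := fun x hx => by
    have hex : ∃ a ∈ s, f a = f x := ⟨x, hx, rfl⟩
    have := hf _ (Function.invFunOn_mem hex) x hx
    rw [Function.invFunOn_eq hex, dist_self, mul_zero] at this
    exact dist_le_zero.mp this
  have hg : LipschitzOnWith K g (f '' s) := by
    refine LipschitzOnWith.of_dist_le_mul ?_
    rintro _ ⟨x, hx, rfl⟩ _ ⟨y, hy, rfl⟩
    rw [hgf x hx, hgf y hy]
    exact hf x hx y hy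
  calc μH[d] s = μH[d] (g '' (f '' s)) := by rw [image_image, image_congr hgf, image_id']
    _ ≤ (K : ℝ≥0∞) ^ d * μH[d] (f '' s) := hg.hausdorffMeasure_image_le hd

theorem volume_closedBall_inter_slab_le {ι : Type*} [Fintype ι] {k : ι → ℝ} (hk : k ≠ 0)
    (c : ι → ℝ) {R ε : ℝ} (hR : 0 ≤ R) (hε : 0 ≤ ε) :
    volume {y ∈ closedBall c R | |∑ i, k i * y i| ≤ ε} ≤
      ENNReal.ofReal (2 * ε * (2 * R) ^ (Fintype.card ι - 1) / ‖k‖) := by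
  classical
  have : Nonempty ι := by
    by_contra h
    exact hk (funext fun i => (h ⟨i⟩).elim)
  obtain ⟨j, hj⟩ := Pi.exists_norm_eq_abs_apply k
  -- `T` replaces the `j`-th coordinate, along which `k` is largest, by `⟨k, y⟩`;
  -- it maps the set into a box and has determinant `k j`, with `|k j| = ‖k‖`.
  let T := Matrix.toLin' ((1 : Matrix ι ι ℝ).updateRow j k)
  have hT : ∀ y, T y = Function.update y j (∑ i, k i * y i) := fun y => by
    simp [T, Matrix.updateRow_mulVec, dotProduct]
  have hdet : LinearMap.det T = k j := by
    simp [T, LinearMap.det_toLin', Matrix.det_one_updateRow]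
  have hkj : k j ≠ 0 := by
    rw [← abs_pos, ← hj]
    exact norm_pos_iff.mpr hk
  let box : Set (ι → ℝ) :=
    univ.pi (Function.update (fun i => Icc (c i - R) (c i + R)) j (Icc (-ε) ε))
  have hsub : {y ∈ closedBall c R | |∑ i, k i * y i| ≤ ε} ⊆ T ⁻¹' box := by
    rintro y ⟨hyc, hy⟩ i -
    rw [hT]
    obtain rfl | hi := eq_or_ne i j
    · simpa [abs_le] using hy
    · have := abs_le.mp ((norm_le_pi_norm (y - c) i).trans (mem_closedBall_iff_norm.mp hyc))
      simp only [Function.update_of_ne hi, mem_Icc, Pi.sub_apply] at this ⊢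
      constructor <;> linarith
  have hbox : volume box =
      ENNReal.ofReal (2 * ε) * ENNReal.ofReal (2 * R) ^ (Fintype.card ι - 1) := by
    simp only [box, volume_pi_pi]
    rw [← Finset.mul_prod_erase _ _ (Finset.mem_univ j), Function.update_self, Real.volume_Icc,
      Finset.prod_congr rfl fun i hi => by
        rw [Function.update_of_ne (Finset.ne_of_mem_erase hi), Real.volume_Icc,
          add_sub_sub_cancel, ← two_mul],
      Finset.prod_const, Finset.card_erase_of_mem (Finset.mem_univ j), Finset.card_univ,
      sub_neg_eq_add, ← two_mul]
  calc volume {y ∈ closedBall c R | |∑ i, k i * y i| ≤ ε}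
      ≤ volume (T ⁻¹' box) := measure_mono hsub
    _ = ENNReal.ofReal |(LinearMap.det T)⁻¹| * volume box :=
      Measure.addHaar_preimage_linearMap volume (hdet ▸ hkj) box
    _ = _ := by
      rw [hbox, hdet, abs_inv, ← hj, ← ENNReal.ofReal_pow (by positivity),
        ← ENNReal.ofReal_mul (by positivity), ← ENNReal.ofReal_mul (by positivity)]
      congr 1
      field_simp

theorem volume_resonant_le {ι : Type*} [Fintype ι] {s : Set (ι → ℝ)}
    {ω : (ι → ℝ) → (ι → ℝ)} {K : ℝ≥0} {c : ι → ℝ} {R : ℝ}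
    (hanti : ∀ x ∈ s, ∀ y ∈ s, dist x y ≤ K * dist (ω x) (ω y))
    (hω : MapsTo ω s (closedBall c R)) (hR : 0 ≤ R) {k : ι → ℝ} (hk : k ≠ 0) {ε : ℝ}
    (hε : 0 ≤ ε) :
    volume {ξ ∈ s | |∑ i, k i * ω ξ i| ≤ ε} ≤
      ENNReal.ofReal (K ^ Fintype.card ι * (2 * ε * (2 * R) ^ (Fintype.card ι - 1) / ‖k‖)) := by
  set n := Fintype.card ι
  set S := {ξ ∈ s | |∑ i, k i * ω ξ i| ≤ ε}
  have himage : ω '' S ⊆ {y ∈ closedBall c R | |∑ i, k i * y i| ≤ ε} := by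
    rintro _ ⟨ξ, ⟨hξ, hres⟩, rfl⟩
    exact ⟨hω hξ, hres⟩
  calc volume S = μH[n] S := by rw [hausdorffMeasure_pi_real]
    _ ≤ (K : ℝ≥0∞) ^ (n : ℝ) * μH[n] (ω '' S) :=
      hausdorffMeasure_le_of_dist_le_mul_dist (fun x hx y hy => hanti x hx.1 y hy.1)
        (Nat.cast_nonneg _)
    _ ≤ (K : ℝ≥0∞) ^ (n : ℝ) * ENNReal.ofReal (2 * ε * (2 * R) ^ (n - 1) / ‖k‖) := by
      rw [hausdorffMeasure_pi_real]
      gcongr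
      exact (measure_mono himage).trans (volume_closedBall_inter_slab_le hk c hR hε)
    _ = _ := by
      rw [ENNReal.rpow_natCast, ← ENNReal.ofReal_coe_nnreal, ← ENNReal.ofReal_pow K.coe_nonneg,
        ← ENNReal.ofReal_mul (by positivity)]

theorem volume_resonant_int_le {ι : Type*} [Fintype ι] {s : Set (ι → ℝ)}
    {ω : (ι → ℝ) → (ι → ℝ)} {K : ℝ≥0} {c : ι → ℝ} {R : ℝ}
    (hanti : ∀ x ∈ s, ∀ y ∈ s, dist x y ≤ K * dist (ω x) (ω y))
    (hω : MapsTo ω s (closedBall c R)) (hR : 0 ≤ R) {k : ι → ℤ} (hk : k ≠ 0) {γ τ : ℝ}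
    (hγ : 0 ≤ γ) :
    volume {ξ ∈ s | |∑ i, (k i : ℝ) * ω ξ i| ≤ γ * ‖k‖ ^ (-τ)} ≤
      ENNReal.ofReal (2 * K ^ Fintype.card ι * (2 * R) ^ (Fintype.card ι - 1) * γ *
        ‖k‖ ^ (-(τ + 1))) := by
  have hk' : (fun i => (k i : ℝ)) ≠ 0 := fun h => hk (funext fun i => by simpa using congrFun h i)
  have hkpos : 0 < ‖k‖ := norm_pos_iff.mpr hk
  refine (volume_resonant_le hanti hω hR hk' (by positivity)).trans_eq ?_
  rw [Pi.norm_intCast, neg_add, Real.rpow_add hkpos, Real.rpow_neg_one]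
  congr 1
  field_simp

theorem stmt7_general (d : ℕ) (C τ : ℝ) (hC : 0 < C) (hτ : (d : ℝ) < τ)
    (Pa : Set (Fin d → ℝ)) (hPab : Bornology.IsBounded Pa)
    (ω : (Fin d → ℝ) → (Fin d → ℝ))
    (hlip : ∀ ξ ∈ Pa, ∀ ξ' ∈ Pa, ‖ω ξ - ω ξ'‖ ≤ C * ‖ξ - ξ'‖)
    (hanti : ∀ ξ ∈ Pa, ∀ ξ' ∈ Pa, ‖ξ - ξ'‖ ≤ C * ‖ω ξ - ω ξ'‖) :
    ∃ C'' : ℝ, 0 ≤ C'' ∧ ∀ γ : ℝ, 0 < γ →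
      MeasureTheory.volume
          {ξ ∈ Pa | ∃ k : Fin d → ℤ, k ≠ 0 ∧
            |∑ j, (k j : ℝ) * ω ξ j| ≤ γ * ‖k‖ ^ (-τ)} ≤
        ENNReal.ofReal (C'' * γ) := by
  have hlip' : LipschitzOnWith C.toNNReal ω Pa := .of_dist_le_mul <| by
    simpa only [dist_eq_norm, Real.coe_toNNReal _ hC.le] using hlip
  have hanti' : ∀ x ∈ Pa, ∀ y ∈ Pa, dist x y ≤ C.toNNReal * dist (ω x) (ω y) := by
    simpa only [dist_eq_norm, Real.coe_toNNReal _ hC.le] using hanti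
  obtain ⟨R, hR, hωR⟩ := (hlip'.isBounded_image hPab).subset_closedBall_lt 0 0
  set A := 2 * (C.toNNReal : ℝ) ^ d * (2 * R) ^ (d - 1)
  set S := ∑' k : {k : Fin d → ℤ // k ≠ 0}, ‖(k : Fin d → ℤ)‖ ^ (-(τ + 1))
  have hsum : Summable fun k : {k : Fin d → ℤ // k ≠ 0} => ‖(k : Fin d → ℤ)‖ ^ (-(τ + 1)) :=
    (summable_int_pi_norm_rpow_neg (by rw [Fintype.card_fin]; linarith)).subtype _
  refine ⟨A * S, by positivity, fun γ hγ => ?_⟩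
  calc volume {ξ ∈ Pa | ∃ k : Fin d → ℤ, k ≠ 0 ∧ |∑ j, (k j : ℝ) * ω ξ j| ≤ γ * ‖k‖ ^ (-τ)}
      ≤ volume (⋃ k : {k : Fin d → ℤ // k ≠ 0},
          {ξ ∈ Pa | |∑ j, (k.1 j : ℝ) * ω ξ j| ≤ γ * ‖k.1‖ ^ (-τ)}) :=
        measure_mono fun ξ ⟨hξ, k, hk, hres⟩ => mem_iUnion.mpr ⟨⟨k, hk⟩, hξ, hres⟩
    _ ≤ ENNReal.ofReal (∑' k : {k : Fin d → ℤ // k ≠ 0}, A * γ * ‖k.1‖ ^ (-(τ + 1))) :=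
        measure_iUnion_le_ofReal_tsum (hsum.mul_left _) (fun _ => by positivity) fun k => by
          simpa only [Fintype.card_fin] using
            volume_resonant_int_le hanti' (mapsTo_iff_image_subset.mpr hωR) hR.le k.2 hγ.le
    _ = ENNReal.ofReal (A * S * γ) := by rw [tsum_mul_left, mul_right_comm]

/-- Full Diophantine exclusion estimate: for `τ > d`, the set of parameters `ξ ∈ Pa`
for which the Diophantine condition `|⟨k, ω(ξ)⟩| > γ|k|^{−τ}` fails for some
nonzero `k ∈ ℤ^d` has Lebesgue measure at most `C'' γ`, with
`C'' = C''(C, d, τ, diam Pa)`. -/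
theorem stmt7 (d : ℕ) (C τ : ℝ) (hC : 0 < C) (hτ : (d : ℝ) < τ)
    (Pa : Set (Fin d → ℝ)) (hPao : IsOpen Pa) (hPab : Bornology.IsBounded Pa)
    (ω : (Fin d → ℝ) → (Fin d → ℝ))
    (hlip : ∀ ξ ∈ Pa, ∀ ξ' ∈ Pa, ‖ω ξ - ω ξ'‖ ≤ C * ‖ξ - ξ'‖)
    (hanti : ∀ ξ ∈ Pa, ∀ ξ' ∈ Pa, ‖ξ - ξ'‖ ≤ C * ‖ω ξ - ω ξ'‖) :
    ∃ C'' : ℝ, 0 ≤ C'' ∧ ∀ γ : ℝ, 0 < γ →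
      MeasureTheory.volume
          {ξ ∈ Pa | ∃ k : Fin d → ℤ, k ≠ 0 ∧
            |∑ j, (k j : ℝ) * ω ξ j| ≤ γ * ‖k‖ ^ (-τ)} ≤
        ENNReal.ofReal (C'' * γ) :=
  stmt7_general d C τ hC hτ Pa hPab ω hlip hanti
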